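/- arXiv:1403.6689 — 2 statements merged into one kernel-verified Lean document; each statement's English description precedes it below -/
import Mathlib

section
/- For any two substitutions φ, ψ with the same index set σ' and any formula F over σ∪σ', the implication ⋀_{p∈σ'}(φ_p ↔ ψ_p) → (φF ↔ ψF) is a theorem of the basic infinitary system. -/
open Classical

/-- Infinitary propositional formulas over a signature `σ`: atoms, set-indexed
conjunctions and disjunctions (represented by families indexed by a type,
which corresponds exactly to *bounded* sets of formulas in the hierarchy),
and implication. -/
inductive IForm (σ : Type) : Type 1
  | atom : σ → IForm σ
  | conj : (ι : Type) → (ι → IForm σ) → IForm σ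
  | disj : (ι : Type) → (ι → IForm σ) → IForm σ
  | impl : IForm σ → IForm σ → IForm σ

namespace IForm

variable {σ : Type}

/-- `⊥` is the empty disjunction. -/
def bot : IForm σ := disj Empty Empty.elim

/-- `¬F` abbreviates `F → ⊥`. -/
def neg (F : IForm σ) : IForm σ := impl F bot

/-- Binary conjunction `F ∧ G` as `{F, G}^∧`. -/
def and2 (F G : IForm σ) : IForm σ := conj Bool (fun b => cond b F G)

/-- Binary disjunction `F ∨ G` as `{F, G}^∨`. -/
def or2 (F G : IForm σ) : IForm σ := disj Bool (fun b => cond b F G)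

/-- Ternary disjunction. -/
def or3 (F G H : IForm σ) : IForm σ := disj (Fin 3) (fun i => [F, G, H].get i)

/-- `F ↔ G` abbreviates `(F → G) ∧ (G → F)`. -/
def biimp (F G : IForm σ) : IForm σ := and2 (impl F G) (impl G F)

/-- Satisfaction of an infinitary formula by an interpretation `I ⊆ σ`. -/
def sat (I : Set σ) : IForm σ → Prop
  | atom p => p ∈ I
  | conj _ f => ∀ i, sat I (f i)
  | disj _ f => ∃ i, sat I (f i)
  | impl F G => sat I F → sat I G

/-- The reduct `F^I` of a formula w.r.t. an interpretation `I`. -/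
noncomputable def reduct (I : Set σ) : IForm σ → IForm σ
  | atom p => if p ∈ I then atom p else bot
  | conj ι f => conj ι (fun i => reduct I (f i))
  | disj ι f => disj ι (fun i => reduct I (f i))
  | impl F G => if sat I (impl F G) then impl (reduct I F) (reduct I G) else bot

/-- `I` satisfies a set of formulas if it satisfies all its elements. -/
def satSet (I : Set σ) (H : Set (IForm σ)) : Prop := ∀ F ∈ H, sat I F

/-- `I` is a stable model of a set `H` of formulas if it is minimal w.r.t.
set inclusion among the interpretations satisfying the reduct `H^I`. -/
def StableModel (I : Set σ) (H : Set (IForm σ)) : Prop :=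
  satSet I (reduct I '' H) ∧ ∀ J : Set σ, satSet J (reduct I '' H) → J ⊆ I → J = I

noncomputable instance : DecidableEq (IForm σ) := Classical.decEq _

/-- The basic infinitary system of natural deduction: sequents `Γ ⇒ F` where
`Γ` is a finite set of infinitary formulas.  Axiom `F ⇒ F`; introduction and
elimination rules for set-indexed conjunction and disjunction and for
implication; weakening. -/
inductive Deriv : Finset (IForm σ) → IForm σ → Prop
  | ax (F : IForm σ) : Deriv {F} F
  | conjI (Γ : Finset (IForm σ)) (ι : Type) (f : ι → IForm σ) :
      (∀ i, Deriv Γ (f i)) → Deriv Γ (conj ι f)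
  | conjE (Γ : Finset (IForm σ)) (ι : Type) (f : ι → IForm σ) (i : ι) :
      Deriv Γ (conj ι f) → Deriv Γ (f i)
  | disjI (Γ : Finset (IForm σ)) (ι : Type) (f : ι → IForm σ) (i : ι) :
      Deriv Γ (f i) → Deriv Γ (disj ι f)
  | disjE (Γ Δ : Finset (IForm σ)) (ι : Type) (f : ι → IForm σ) (F : IForm σ) :
      Deriv Γ (disj ι f) → (∀ i, Deriv (insert (f i) Δ) F) → Deriv (Γ ∪ Δ) F
  | implI (Γ : Finset (IForm σ)) (F G : IForm σ) :
      Deriv (insert F Γ) G → Deriv Γ (impl F G)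
  | implE (Γ Δ : Finset (IForm σ)) (F G : IForm σ) :
      Deriv Γ F → Deriv Δ (impl F G) → Deriv (Γ ∪ Δ) G
  | weak (Γ Δ : Finset (IForm σ)) (F : IForm σ) :
      Deriv Γ F → Deriv (Γ ∪ Δ) F

end IForm
namespace IForm

/-- Application of a substitution `φ` (a family of formulas over `σ` indexed by
a disjoint signature `σ'`) to a formula over `σ ∪ σ'` (modeled as `σ ⊕ σ'`):
atoms of `σ` are unchanged, atoms `q` of `σ'` are replaced by `φ q`, and the
substitution commutes with the connectives. -/
def subst {σ σ' : Type} (φ : σ' → IForm σ) : IForm (σ ⊕ σ') → IForm σ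
  | atom (Sum.inl p) => atom p
  | atom (Sum.inr q) => φ q
  | conj ι f => conj ι fun i => subst φ (f i)
  | disj ι f => disj ι fun i => subst φ (f i)
  | impl F G => impl (subst φ F) (subst φ G)

end IForm

/-! Induction on `F`: atoms of `σ'` are handled by the hypothesis, and every connective
preserves `↔` in the basic system (implication contravariantly in its antecedent). -/

namespace IForm

variable {σ : Type} {Γ : Finset (IForm σ)} {F G : IForm σ}

namespace Deriv

theorem mono {Δ : Finset (IForm σ)} (h : Deriv Γ F) (hΓΔ : Γ ⊆ Δ) : Deriv Δ F := by
  simpa [Finset.union_eq_right.mpr hΓΔ] using weak Γ Δ F h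

theorem weaken (h : Deriv Γ F) : Deriv (insert G Γ) F :=
  h.mono (Finset.subset_insert _ _)

theorem of_mem (h : F ∈ Γ) : Deriv Γ F :=
  (ax F).mono (Finset.singleton_subset_iff.mpr h)

theorem mp (hFG : Deriv Γ (impl F G)) (hF : Deriv Γ F) : Deriv Γ G := by
  simpa using implE Γ Γ F G hF hFG

theorem biimpI (hFG : Deriv Γ (impl F G)) (hGF : Deriv Γ (impl G F)) :
    Deriv Γ (biimp F G) :=
  conjI _ _ _ fun b => by cases b <;> assumption

theorem biimp_imp (h : Deriv Γ (biimp F G)) : Deriv Γ (impl F G) :=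
  conjE _ _ _ true h

theorem biimp_imp_symm (h : Deriv Γ (biimp F G)) : Deriv Γ (impl G F) :=
  conjE _ _ _ false h

theorem imp_self (Γ : Finset (IForm σ)) (F : IForm σ) : Deriv Γ (impl F F) :=
  implI _ _ _ (of_mem (Finset.mem_insert_self _ _))

theorem biimp_refl (Γ : Finset (IForm σ)) (F : IForm σ) : Deriv Γ (biimp F F) :=
  biimpI (imp_self Γ F) (imp_self Γ F)

section Congruence

variable {ι : Type} {f g : ι → IForm σ} {F' G' : IForm σ}

theorem imp_conj_conj (h : ∀ i, Deriv Γ (impl (f i) (g i))) :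
    Deriv Γ (impl (conj ι f) (conj ι g)) :=
  implI _ _ _ <| conjI _ _ _ fun i =>
    (h i).weaken.mp (conjE _ _ _ i (of_mem (Finset.mem_insert_self _ _)))

theorem imp_disj_disj (h : ∀ i, Deriv Γ (impl (f i) (g i))) :
    Deriv Γ (impl (disj ι f) (disj ι g)) := by
  refine implI _ _ _ ?_
  rw [Finset.insert_eq]
  exact disjE _ Γ _ _ _ (ax _) fun i =>
    disjI _ _ _ i ((h i).weaken.mp (of_mem (Finset.mem_insert_self _ _)))

theorem imp_impl_impl (hF : Deriv Γ (impl F' F)) (hG : Deriv Γ (impl G G')) :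
    Deriv Γ (impl (impl F G) (impl F' G')) := by
  refine implI _ _ _ (implI _ _ _ ?_)
  have hF' : Deriv (insert F' (insert (impl F G) Γ)) F' :=
    of_mem (Finset.mem_insert_self _ _)
  have hFG : Deriv (insert F' (insert (impl F G) Γ)) (impl F G) :=
    of_mem (Finset.mem_insert_of_mem (Finset.mem_insert_self _ _))
  exact hG.weaken.weaken.mp (hFG.mp (hF.weaken.weaken.mp hF'))

theorem biimp_conj_conj (h : ∀ i, Deriv Γ (biimp (f i) (g i))) :
    Deriv Γ (biimp (conj ι f) (conj ι g)) :=
  biimpI (imp_conj_conj fun i => (h i).biimp_imp)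
    (imp_conj_conj fun i => (h i).biimp_imp_symm)

theorem biimp_disj_disj (h : ∀ i, Deriv Γ (biimp (f i) (g i))) :
    Deriv Γ (biimp (disj ι f) (disj ι g)) :=
  biimpI (imp_disj_disj fun i => (h i).biimp_imp)
    (imp_disj_disj fun i => (h i).biimp_imp_symm)

theorem biimp_impl_impl (hF : Deriv Γ (biimp F F')) (hG : Deriv Γ (biimp G G')) :
    Deriv Γ (biimp (impl F G) (impl F' G')) :=
  biimpI (imp_impl_impl hF.biimp_imp_symm hG.biimp_imp)
    (imp_impl_impl hF.biimp_imp hG.biimp_imp_symm)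

end Congruence

theorem biimp_subst {σ' : Type} {φ ψ : σ' → IForm σ}
    (h : Deriv Γ (conj σ' fun p => biimp (φ p) (ψ p))) :
    ∀ F : IForm (σ ⊕ σ'), Deriv Γ (biimp (subst φ F) (subst ψ F))
  | atom (Sum.inl p) => biimp_refl Γ (atom p)
  | atom (Sum.inr q) => conjE _ _ _ q h
  | conj _ f => biimp_conj_conj fun i => biimp_subst h (f i)
  | disj _ f => biimp_disj_disj fun i => biimp_subst h (f i)
  | impl F G => biimp_impl_impl (biimp_subst h F) (biimp_subst h G)

end Deriv

end IForm

open IForm in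
/-- For substitutions `φ, ψ` with the same index set `σ'` and any
formula `F` over `σ ∪ σ'`, the implication
`⋀_{p∈σ'}(φ_p ↔ ψ_p) → (φF ↔ ψF)` is a theorem of the basic system. -/
theorem basic_replacement_imp {σ σ' : Type} (φ ψ : σ' → IForm σ)
    (F : IForm (σ ⊕ σ')) :
    Deriv ∅ (impl
      (conj σ' fun p => biimp (φ p) (ψ p))
      (biimp (subst φ F) (subst ψ F))) :=
  Deriv.implI _ _ _ (Deriv.biimp_subst (Deriv.of_mem (Finset.mem_insert_self _ _)) F)
end

section
/- If infinitary formulas F and G are equivalent in the basic system (F↔G is a theorem), then for any set 𝓗 of infinitary formulas, 𝓗 ∪ {F} and 𝓗 ∪ {G} have the same stable models. -/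
open Classical

/-!
The basic system is sound for the "reduct semantics" of a fixed interpretation `I`: if `Γ ⇒ F`
is derivable and `J` satisfies the reducts `K^I` of all `K ∈ Γ`, then `J` satisfies `F^I`.
The only delicate rule is →-introduction, since `(F → G)^I` is `⊥` unless `I ⊨ F → G`; this is
settled by taking `J := I`, because `I ⊨ K^I ↔ I ⊨ K` and any `J ⊨ K^I` forces `I ⊨ K`.
Applied to `⇒ F ↔ G`, soundness says that `F^I` and `G^I` have the same models, so the reducts
of `𝓗 ∪ {F}` and `𝓗 ∪ {G}` have the same models and hence `I` is minimal for one iff for the other.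
-/

namespace IForm

variable {σ : Type} {I J : Set σ}

theorem not_sat_bot (I : Set σ) : ¬ sat I (bot : IForm σ) := fun ⟨i, _⟩ => i.elim

theorem sat_reduct_atom_iff {p : σ} : sat J (reduct I (atom p)) ↔ p ∈ I ∧ p ∈ J := by
  rw [reduct]
  split_ifs with hp
  · simp only [sat, hp, true_and]
  · simp only [hp, false_and, iff_false]
    exact not_sat_bot J

theorem sat_reduct_impl_iff {F G : IForm σ} :
    sat J (reduct I (impl F G)) ↔
      sat I (impl F G) ∧ (sat J (reduct I F) → sat J (reduct I G)) := by
  rw [reduct]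
  split_ifs with hp
  · exact (and_iff_right hp).symm
  · simp only [hp, false_and, iff_false]
    exact not_sat_bot J

theorem sat_of_sat_reduct : ∀ {F : IForm σ}, sat J (reduct I F) → sat I F
  | atom _, h => (sat_reduct_atom_iff.1 h).1
  | conj _ _, h => fun i => sat_of_sat_reduct (h i)
  | disj _ _, ⟨i, hi⟩ => ⟨i, sat_of_sat_reduct hi⟩
  | impl _ _, h => (sat_reduct_impl_iff.1 h).1

theorem sat_reduct_self_iff : ∀ {F : IForm σ}, sat I (reduct I F) ↔ sat I F
  | atom _ => sat_reduct_atom_iff.trans and_self_iff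
  | conj _ _ => forall_congr' fun _ => sat_reduct_self_iff
  | disj _ _ => exists_congr fun _ => sat_reduct_self_iff
  | impl _ _ => sat_reduct_impl_iff.trans
      ⟨And.left, fun h => ⟨h, fun hF => sat_reduct_self_iff.2 (h (sat_reduct_self_iff.1 hF))⟩⟩

theorem Deriv.sat_reduct {Γ : Finset (IForm σ)} {F : IForm σ} (d : Deriv Γ F)
    (hΓ : ∀ K ∈ Γ, sat J (reduct I K)) : sat J (reduct I F) := by
  induction d generalizing J with
  | ax F => exact hΓ F (Finset.mem_singleton_self F)
  | conjI _ _ _ _ ih => exact fun i => ih i hΓ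
  | conjE _ _ _ i _ ih => exact ih hΓ i
  | disjI _ _ _ i _ ih => exact ⟨i, ih hΓ⟩
  | disjE _ _ _ _ _ _ _ ih₁ ih₂ =>
      obtain ⟨hΓ₁, hΓ₂⟩ := Finset.forall_mem_union.1 hΓ
      obtain ⟨i, hi⟩ := ih₁ hΓ₁
      exact ih₂ i ((Finset.forall_mem_insert ..).2 ⟨hi, hΓ₂⟩)
  | implI _ _ _ _ ih =>
      have hI : sat I (impl _ _) := fun hF => sat_reduct_self_iff.1 <| ih <|
        (Finset.forall_mem_insert ..).2 ⟨sat_reduct_self_iff.2 hF,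
          fun K hK => sat_reduct_self_iff.2 (sat_of_sat_reduct (hΓ K hK))⟩
      exact sat_reduct_impl_iff.2 ⟨hI, fun hF => ih ((Finset.forall_mem_insert ..).2 ⟨hF, hΓ⟩)⟩
  | implE _ _ _ _ _ _ ih₁ ih₂ =>
      obtain ⟨hΓ₁, hΓ₂⟩ := Finset.forall_mem_union.1 hΓ
      exact (sat_reduct_impl_iff.1 (ih₂ hΓ₂)).2 (ih₁ hΓ₁)
  | weak _ _ _ _ ih => exact ih (Finset.forall_mem_union.1 hΓ).1

theorem sat_reduct_iff_of_deriv_biimp {F G : IForm σ} (h : Deriv ∅ (biimp F G)) :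
    sat J (reduct I F) ↔ sat J (reduct I G) := by
  have hreduct : sat J (reduct I (biimp F G)) := h.sat_reduct (by simp)
  exact ⟨(sat_reduct_impl_iff.1 (hreduct true)).2, (sat_reduct_impl_iff.1 (hreduct false)).2⟩

theorem satSet_reduct_union_singleton_congr (H : Set (IForm σ)) {F G : IForm σ}
    (hFG : sat J (reduct I F) ↔ sat J (reduct I G)) :
    satSet J (reduct I '' (H ∪ {F})) ↔ satSet J (reduct I '' (H ∪ {G})) := by
  simp only [satSet, Set.image_union, Set.image_singleton, Set.mem_union,
    Set.mem_singleton_iff, or_imp, forall_and, forall_eq, hFG]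

theorem stableModel_congr {H₁ H₂ : Set (IForm σ)}
    (hH : ∀ J : Set σ, satSet J (reduct I '' H₁) ↔ satSet J (reduct I '' H₂)) :
    StableModel I H₁ ↔ StableModel I H₂ := by
  simp only [StableModel, hH]

end IForm

/-- Main Theorem (b): If `F` is equivalent to `G` in the basic
system, then for any set `𝓗` of infinitary formulas, `𝓗 ∪ {F}` and
`𝓗 ∪ {G}` have the same stable models. -/
theorem main_theorem_b {σ : Type} (F G : IForm σ)
    (h : IForm.Deriv ∅ (IForm.biimp F G)) (H : Set (IForm σ)) :
    ∀ I : Set σ, IForm.StableModel I (H ∪ {F}) ↔ IForm.StableModel I (H ∪ {G}) :=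
  fun _ => IForm.stableModel_congr fun _ =>
    IForm.satSet_reduct_union_singleton_congr H (IForm.sat_reduct_iff_of_deriv_biimp h)
end
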